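/- In the twist-knot game TKNTK with an odd number n of twist precrossings, Ursula (who wins if the final resolution is unknotted) has a winning strategy as the first player. -/

import Mathlib

/-!
Ursula opens on the twist crossing `0`. The remaining `n + 1` crossings split into the pairs
`{1, 2}, {3, 4}, …, {n, n + 1}`, the last one being the clasp pair because `n` is odd. Whenever
King Lear resolves a crossing, Ursula resolves its partner with the opposite sign, so the two
clasp signs end up different and the resolution is unknotted.
-/

/-- The sign of a crossing resolution: `true ↦ +1`, `false ↦ -1`. -/
def sgn (b : Bool) : ℤ := if b then 1 else -1

/-- Sum of the signs of the `n` twist crossings (indices `0, …, n-1`). -/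
def twistSum (n : ℕ) (f : Fin (n + 2) → Bool) : ℤ :=
  ∑ i : Fin n, sgn (f (Fin.castLE (by omega) i))

/-- A full resolution of the twist-knot shadow with `n` twist precrossings and two clasp
precrossings (indices `n` and `n+1`) is knotted iff the clasp signs agree and the twist
sum either has absolute value `≥ 2` or equals the common clasp sign. -/
def Knotted (n : ℕ) (f : Fin (n + 2) → Bool) : Prop :=
  f ⟨n, by omega⟩ = f ⟨n + 1, by omega⟩ ∧
    (2 ≤ |twistSum n f| ∨ twistSum n f = sgn (f ⟨n, by omega⟩))

/-- Partial resolutions: each of the `k` crossings is unresolved (`none`) or carries a sign. -/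
abbrev PartialRes (k : ℕ) := Fin k → Option Bool

/-- `Force A fuel moverIsForcer p` : with `fuel` moves remaining from position `p`, the
player whose winning condition on full resolutions is `A` can force the game (in which the
two players alternately pick a still-unresolved crossing and assign it a sign of their
choice) to end in a full resolution satisfying `A`.  This backward-induction predicate is
equivalent to the existence of a winning strategy in the finite game. -/
def Force {k : ℕ} (A : (Fin k → Bool) → Prop) : ℕ → Bool → PartialRes k → Prop
  | 0, _, p => ∃ f : Fin k → Bool, (∀ i, p i = some (f i)) ∧ A f
  | m + 1, true, p => ∃ i, p i = none ∧ ∃ s : Bool,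
      Force A m false (Function.update p i (some s))
  | m + 1, false, p => ∀ i, p i = none → ∀ s : Bool,
      Force A m true (Function.update p i (some s))

/-- The totally unresolved shadow. -/
def emptyRes (k : ℕ) : PartialRes k := fun _ => none

open Function Finset

section Pairing

variable {k : ℕ} {σ : Fin k → Fin k} {p : PartialRes k}

def unresolved (p : PartialRes k) : Finset (Fin k) := {i | p i = none}

/-- `p (σ i) = (p i).map not`: the crossings `i` and `σ i` are both unresolved or carry
opposite signs. -/
def OppositeOnPairs (σ : Fin k → Fin k) (p : PartialRes k) : Prop :=
  (∀ i, σ i = i → p i ≠ none) ∧ ∀ i, σ i ≠ i → p (σ i) = (p i).map not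

theorem OppositeOnPairs.update_pair (hσ : Involutive σ) (hp : OppositeOnPairs σ p)
    {i : Fin k} (hi : p i = none) (s : Bool) :
    OppositeOnPairs σ (update (update p i (some s)) (σ i) (some !s)) := by
  have hσi : σ i ≠ i := fun h => hp.1 i h hi
  refine ⟨fun x hx => ?_, fun x hx => ?_⟩
  · have hxi : x ≠ i := by rintro rfl; exact hσi hx
    have hxσi : x ≠ σ i := by rintro rfl; exact hσi (hσ.injective (by rw [hx]))
    simpa [update_apply, hxi, hxσi] using hp.1 x hx
  · by_cases hxi : x = i
    · subst hxi; simp [hσi.symm]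
    by_cases hxσi : x = σ i
    · subst hxσi; simp [hσ i, hσi.symm]
    have h1 : σ x ≠ σ i := hσ.injective.ne hxi
    have h2 : σ x ≠ i := fun h => hxσi (by rw [← h, hσ])
    simpa [update_apply, hxi, hxσi, h1, h2] using hp.2 x hx

theorem card_unresolved_update_pair {i j : Fin k} (hi : p i = none) (hj : p j = none)
    (hij : i ≠ j) (a b : Bool) :
    #(unresolved (update (update p i (some a)) j (some b))) + 2 = #(unresolved p) := by
  have hset : unresolved (update (update p i (some a)) j (some b)) =
      ((unresolved p).erase i).erase j := by
    ext x
    by_cases hxi : x = i <;> by_cases hxj : x = j <;> simp [unresolved, update_apply, hxi, hxj, hij]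
  have hmi : i ∈ unresolved p := by simp [unresolved, hi]
  have hmj : j ∈ (unresolved p).erase i := by simp [unresolved, hj, hij.symm]
  rw [hset, ← card_erase_add_one hmi, ← card_erase_add_one hmj]

theorem card_unresolved_update_emptyRes (i : Fin k) (b : Bool) :
    #(unresolved (update (emptyRes k) i (some b))) + 1 = k := by
  have : unresolved (update (emptyRes k) i (some b)) = univ.erase i := by
    ext x; by_cases hx : x = i <;> simp [unresolved, emptyRes, update_apply, hx]
  rw [this, card_erase_add_one (mem_univ i), card_univ, Fintype.card_fin]

theorem exists_eq_some_of_card_unresolved_eq_zero (h : #(unresolved p) = 0) :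
    ∃ f : Fin k → Bool, ∀ i, p i = some (f i) := by
  have hres : ∀ i, ∃ b, p i = some b := fun i =>
    Option.ne_none_iff_exists'.mp fun hi => by
      simp_all [unresolved, filter_eq_empty_iff]
  exact ⟨fun i => (hres i).choose, fun i => (hres i).choose_spec⟩

/-- The pairing strategy: whenever the opponent resolves a crossing, answer on its `σ`-partner
with the opposite sign. -/
theorem force_of_oppositeOnPairs (hσ : Involutive σ) {A : (Fin k → Bool) → Prop}
    (hA : ∀ f : Fin k → Bool, (∀ i, σ i ≠ i → f (σ i) = !f i) → A f) (j : ℕ) :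
    ∀ p, #(unresolved p) = 2 * j → OppositeOnPairs σ p → Force A (2 * j) false p := by
  induction j with
  | zero =>
    intro p hcard hp
    obtain ⟨f, hf⟩ := exists_eq_some_of_card_unresolved_eq_zero hcard
    refine ⟨f, hf, hA f fun i hi => ?_⟩
    simpa [hf] using hp.2 i hi
  | succ j ih =>
    intro p hcard hp i hi s
    have hσi : σ i ≠ i := fun h => hp.1 i h hi
    have hpσi : p (σ i) = none := by simp [hp.2 i hσi, hi]
    refine ⟨σ i, by simpa [update_apply, hσi] using hpσi, !s, ih _ ?_ (hp.update_pair hσ hi s)⟩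
    have := card_unresolved_update_pair hi hpσi hσi.symm s !s
    omega

end Pairing

/-- The twist crossings `1, …, n - 1` are paired as `{1, 2}, {3, 4}, …`, which for odd `n`
continues with the clasp pair `{n, n + 1}`; crossing `0` is left unpaired
(`0 - 1 = 0`). -/
def partner (v : ℕ) : ℕ := if v % 2 = 1 then v + 1 else v - 1

theorem partner_involutive : Involutive partner := by
  intro v; unfold partner; split_ifs <;> omega

theorem eq_zero_of_partner_eq_self {v : ℕ} (h : partner v = v) : v = 0 := by
  unfold partner at h; split_ifs at h <;> omega

theorem partner_lt {n v : ℕ} (hn : Odd n) (hv : v < n + 2) : partner v < n + 2 := by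
  rw [Nat.odd_iff] at hn; unfold partner; split_ifs <;> omega

theorem partner_of_odd {n : ℕ} (hn : Odd n) : partner n = n + 1 := by
  rw [Nat.odd_iff] at hn; simp [partner, hn]

def crossingPartner {n : ℕ} (hn : Odd n) (i : Fin (n + 2)) : Fin (n + 2) :=
  ⟨partner i, partner_lt hn i.isLt⟩

theorem crossingPartner_involutive {n : ℕ} (hn : Odd n) : Involutive (crossingPartner hn) :=
  fun i => Fin.ext (partner_involutive i)

theorem oppositeOnPairs_update_emptyRes_zero {n : ℕ} (hn : Odd n) (b : Bool) :
    OppositeOnPairs (crossingPartner hn) (update (emptyRes (n + 2)) 0 (some b)) := by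
  have hσ0 : crossingPartner hn 0 = 0 := rfl
  refine ⟨fun x hx => ?_, fun x hx => ?_⟩
  · obtain rfl : x = 0 := Fin.ext (eq_zero_of_partner_eq_self (congrArg Fin.val hx))
    simp
  · have hx0 : x ≠ 0 := by rintro rfl; exact hx hσ0
    have hσx0 : crossingPartner hn x ≠ 0 := fun h =>
      hx0 (by rw [← crossingPartner_involutive hn x, h, hσ0])
    simp [emptyRes, hx0, hσx0]

theorem not_knotted_of_opposite_partners {n : ℕ} (hn : Odd n) (f : Fin (n + 2) → Bool)
    (hf : ∀ i, crossingPartner hn i ≠ i → f (crossingPartner hn i) = !f i) :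
    ¬ Knotted n f := by
  have hclasp : crossingPartner hn ⟨n, by omega⟩ = ⟨n + 1, by omega⟩ :=
    Fin.ext (partner_of_odd hn)
  have hopp := hf ⟨n, by omega⟩ (by simp [hclasp])
  rw [hclasp] at hopp
  exact fun hk => by simp [hk.1] at hopp

/-- TKNTK with an odd number `n` of twist precrossings:
Ursula (goal: unknotted) has a winning strategy moving first. -/
theorem tkntk_odd_ursula_first_wins (n : ℕ) (hn : Odd n) :
    Force (fun f => ¬ Knotted n f) (n + 2) true (emptyRes (n + 2)) := by
  refine ⟨0, rfl, true, ?_⟩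
  have ⟨m, hm⟩ := hn
  have hcard := card_unresolved_update_emptyRes (0 : Fin (n + 2)) true
  have hwin := force_of_oppositeOnPairs (crossingPartner_involutive hn)
    (not_knotted_of_opposite_partners hn) (m + 1) _ (by omega)
    (oppositeOnPairs_update_emptyRes_zero hn true)
  rwa [show 2 * (m + 1) = n + 1 by omega] at hwin
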